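/- Let q ≥ 2 and let G be the thick headless spider of order q: the graph on vertices u₁, …, u_q, v₁, …, v_q where {u₁, …, u_q} is a clique, {v₁, …, v_q} is a stable set, and the edges between the two sets are exactly (u_i, v_j) for all i, j ∈ {1, …, q} with i ≠ j. Then η(G) = ⌈(q + 1)/2⌉. -/

import Mathlib

open Classical in
/-- Sum of the labels `f` over the open neighborhood of `v` in `G`. -/
noncomputable def nbrSum {V : Type*} [Fintype V] (G : SimpleGraph V) (f : V → ℕ) (v : V) : ℕ :=
  ∑ w ∈ Finset.univ.filter (fun w => G.Adj v w), f w

open Classical in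
/-- The degree of `v` in `G`. -/
noncomputable def deg {V : Type*} [Fintype V] (G : SimpleGraph V) (v : V) : ℕ :=
  (Finset.univ.filter (fun w => G.Adj v w)).card

/-- `f : V → {1,…,k}` is an additive `k`-coloring of `G`: labels lie in `{1,…,k}` and
adjacent vertices get distinct open-neighborhood sums. -/
def IsAdditiveColoring {V : Type*} [Fintype V] (G : SimpleGraph V) (k : ℕ) (f : V → ℕ) : Prop :=
  (∀ v, 1 ≤ f v ∧ f v ≤ k) ∧ ∀ u v, G.Adj u v → nbrSum G f u ≠ nbrSum G f v

/-- The additive chromatic number `η(G)`: the least `k` admitting an additive `k`-coloring. -/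
noncomputable def eta {V : Type*} [Fintype V] (G : SimpleGraph V) : ℕ :=
  sInf {k | ∃ f : V → ℕ, IsAdditiveColoring G k f}

/-- The thick headless spider of order `q`: `Sum.inl i` is the clique vertex `uᵢ`,
`Sum.inr i` is the stable-set vertex `vᵢ`, and `uᵢ` is adjacent to `vⱼ` iff `i ≠ j`. -/
def thickSpider (q : ℕ) : SimpleGraph (Fin q ⊕ Fin q) where
  Adj x y :=
    match x, y with
    | Sum.inl i, Sum.inl j => i ≠ j
    | Sum.inl i, Sum.inr j => i ≠ j
    | Sum.inr i, Sum.inl j => i ≠ j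
    | Sum.inr _, Sum.inr _ => False
  symm := by
    constructor
    rintro (i | i) (j | j) h
    · exact fun e => h e.symm
    · exact fun e => h e.symm
    · exact fun e => h e.symm
    · exact h.elim
  loopless := by
    constructor
    rintro (i | i) h
    · exact h rfl
    · exact h

/-!
Write `pᵢ = f(uᵢ) + f(vᵢ)`. The neighbourhood sums are `N(uᵢ) = ∑ⱼ pⱼ - pᵢ` and
`N(vⱼ) = ∑ₗ f(uₗ) - f(uⱼ)`, so the clique edges say exactly that the `q` pair sums are distinct;
as they lie in `[2, 2k]`, this forces `q + 1 ≤ 2k`. Conversely, when `q + 1 ≤ 2k` the pair sums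
`pᵢ = i + 2` can be realised with stable labels `min (i + 1) k`, whose total exceeds `q`; then
`N(uᵢ) = N(vⱼ)` would need `pᵢ = ∑ₗ f(vₗ) + f(uⱼ) > q + 1`, which is impossible.
-/

open Finset Function

namespace ThickSpider

variable {q : ℕ}

def pairSum (f : Fin q ⊕ Fin q → ℕ) (i : Fin q) : ℕ :=
  f (Sum.inl i) + f (Sum.inr i)

lemma nbrSum_inl_add_pairSum (f : Fin q ⊕ Fin q → ℕ) (i : Fin q) :
    nbrSum (thickSpider q) f (Sum.inl i) + pairSum f i = ∑ j, pairSum f j := by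
  classical
  have hadj : ∀ j, (thickSpider q).Adj (Sum.inl i) (Sum.inl j) ↔ i ≠ j := fun _ => Iff.rfl
  have hadj' : ∀ j, (thickSpider q).Adj (Sum.inl i) (Sum.inr j) ↔ i ≠ j := fun _ => Iff.rfl
  rw [nbrSum, sum_filter, Fintype.sum_sum_type]
  simp only [hadj, hadj']
  rw [← sum_filter, ← sum_filter, filter_ne, ← sum_add_distrib, ← sum_erase_add _ _ (mem_univ i)]
  rfl

lemma nbrSum_inr_add (f : Fin q ⊕ Fin q → ℕ) (i : Fin q) :
    nbrSum (thickSpider q) f (Sum.inr i) + f (Sum.inl i) = ∑ j, f (Sum.inl j) := by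
  classical
  have hadj : ∀ j, (thickSpider q).Adj (Sum.inr i) (Sum.inl j) ↔ i ≠ j := fun _ => Iff.rfl
  have hadj' : ∀ j, (thickSpider q).Adj (Sum.inr i) (Sum.inr j) ↔ False := fun _ => Iff.rfl
  rw [nbrSum, sum_filter, Fintype.sum_sum_type]
  simp only [hadj, hadj', if_false, sum_const_zero, add_zero]
  rw [← sum_filter, filter_ne, sum_erase_add _ _ (mem_univ i)]

lemma nbrSum_inl_ne_inl_iff (f : Fin q ⊕ Fin q → ℕ) (i j : Fin q) :
    nbrSum (thickSpider q) f (Sum.inl i) ≠ nbrSum (thickSpider q) f (Sum.inl j) ↔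
      pairSum f i ≠ pairSum f j := by
  have := nbrSum_inl_add_pairSum f i
  have := nbrSum_inl_add_pairSum f j
  omega

lemma nbrSum_inl_ne_inr_iff (f : Fin q ⊕ Fin q → ℕ) (i j : Fin q) :
    nbrSum (thickSpider q) f (Sum.inl i) ≠ nbrSum (thickSpider q) f (Sum.inr j) ↔
      pairSum f i ≠ ∑ l, f (Sum.inr l) + f (Sum.inl j) := by
  have := nbrSum_inl_add_pairSum f i
  have := nbrSum_inr_add f j
  have : ∑ l, pairSum f l = ∑ l, f (Sum.inl l) + ∑ l, f (Sum.inr l) := sum_add_distrib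
  omega

lemma isAdditiveColoring_iff {k : ℕ} {f : Fin q ⊕ Fin q → ℕ} :
    IsAdditiveColoring (thickSpider q) k f ↔ (∀ v, 1 ≤ f v ∧ f v ≤ k) ∧ Injective (pairSum f) ∧
      ∀ i j, i ≠ j → pairSum f i ≠ ∑ l, f (Sum.inr l) + f (Sum.inl j) := by
  refine and_congr_right fun _ => ⟨fun h => ⟨fun i j hij => ?_, fun i j hne => ?_⟩, ?_⟩
  · by_contra hne
    exact (nbrSum_inl_ne_inl_iff f i j).1 (h _ _ hne) hij
  · exact (nbrSum_inl_ne_inr_iff f i j).1 (h _ _ hne)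
  · rintro ⟨hinj, hcross⟩ (i | i) (j | j) hadj
    · exact (nbrSum_inl_ne_inl_iff f i j).2 (hinj.ne hadj)
    · exact (nbrSum_inl_ne_inr_iff f i j).2 (hcross i j hadj)
    · exact ((nbrSum_inl_ne_inr_iff f j i).2 (hcross j i (Ne.symm hadj))).symm
    · exact hadj.elim

lemma add_one_le_two_mul_of_isAdditiveColoring {k : ℕ} {f : Fin q ⊕ Fin q → ℕ} (hq : 0 < q)
    (hf : IsAdditiveColoring (thickSpider q) k f) : q + 1 ≤ 2 * k := by
  obtain ⟨hbound, hinj, -⟩ := isAdditiveColoring_iff.1 hf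
  have hmaps : Set.MapsTo (pairSum f) (univ : Finset (Fin q)) (Icc 2 (2 * k)) := fun i _ => by
    have := hbound (Sum.inl i)
    have := hbound (Sum.inr i)
    simp only [coe_Icc, Set.mem_Icc, pairSum]
    omega
  have hcard := card_le_card_of_injOn _ hmaps hinj.injOn
  rw [card_univ, Fintype.card_fin, Nat.card_Icc] at hcard
  omega

def labeling (k : ℕ) : Fin q ⊕ Fin q → ℕ :=
  Sum.elim (fun i => (i : ℕ) + 2 - min ((i : ℕ) + 1) k) (fun i => min ((i : ℕ) + 1) k)

lemma pairSum_labeling (k : ℕ) (i : Fin q) : pairSum (labeling k) i = i + 2 := by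
  simp only [pairSum, labeling, Sum.elim_inl, Sum.elim_inr]
  omega

lemma labeling_mem_Icc {k : ℕ} (hqk : q + 1 ≤ 2 * k) (v : Fin q ⊕ Fin q) :
    1 ≤ labeling k v ∧ labeling k v ≤ k := by
  rcases v with i | i <;> simp only [labeling, Sum.elim_inl, Sum.elim_inr] <;> omega

lemma lt_sum_labeling_inr {k : ℕ} (hq : 2 ≤ q) (hk : 2 ≤ k) :
    q < ∑ j, labeling k (Sum.inr j : Fin q ⊕ Fin q) := by
  have hlt : ∑ _j : Fin q, 1 < ∑ j, labeling k (Sum.inr j : Fin q ⊕ Fin q) :=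
    sum_lt_sum (fun j _ => by simp only [labeling, Sum.elim_inr]; omega)
      ⟨⟨1, hq⟩, mem_univ _, by simp only [labeling, Sum.elim_inr]; omega⟩
  simpa using hlt

lemma isAdditiveColoring_labeling {k : ℕ} (hq : 2 ≤ q) (hqk : q + 1 ≤ 2 * k) :
    IsAdditiveColoring (thickSpider q) k (labeling k) := by
  refine isAdditiveColoring_iff.2 ⟨labeling_mem_Icc hqk, fun i j hij => ?_, fun i j _ => ?_⟩
  · rw [pairSum_labeling, pairSum_labeling] at hij
    exact Fin.ext (by omega)
  · have := lt_sum_labeling_inr (k := k) hq (by omega)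
    have := (labeling_mem_Icc hqk (Sum.inl j)).1
    rw [pairSum_labeling]
    omega

end ThickSpider

/-- The thick headless spider of order `q ≥ 2` satisfies `η(G) = ⌈(q + 1)/2⌉`. -/
theorem eta_thickSpider (q : ℕ) (hq : 2 ≤ q) :
    eta (thickSpider q) = (q + 1) ⌈/⌉ 2 := by
  refine IsLeast.csInf_eq ⟨⟨ThickSpider.labeling _, ThickSpider.isAdditiveColoring_labeling hq ?_⟩, ?_⟩
  · simpa using le_smul_ceilDiv (b := q + 1) (two_pos : (0 : ℕ) < 2)
  · rintro k ⟨f, hf⟩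
    exact (ceilDiv_le_iff_le_mul two_pos).2
      (ThickSpider.add_one_le_two_mul_of_isAdditiveColoring (by omega) hf)
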